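/- arXiv:2410.01682 — 3 statements merged into one kernel-verified Lean document; each statement's English description precedes it below -/
import Mathlib

section
/- Let H be an r-uniform multihypergraph with r ≥ 2. Then 2r·surp_r(H) ≥ surp_{r−1}(H). More precisely, if V(H) admits an (r−1)-partition achieving mc_{r−1}(H), then moving each vertex independently with probability 1/r into a new r-th part yields an r-partition whose expected number of cut edges is at least (r!/r^r)·e(H) + (1/(2r))·surp_{r−1}(H). -/
/-- The Stirling number of the second kind `S(r,k)`. -/
def stirlingSecond (r k : ℕ) : ℕ :=
  (Finset.univ.filter fun f : Fin r → Fin k => Function.Surjective f).card / Nat.factorial k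

variable {V : Type*} [Fintype V] [DecidableEq V]

/-- The number of edges (with multiplicity `w`) cut by the `k`-partition `f`. -/
def cutCount {k : ℕ} (w : Finset V → ℕ) (f : V → Fin k) : ℝ :=
  ∑ e : Finset V, if ∀ j : Fin k, ∃ v ∈ e, f v = j then (w e : ℝ) else 0

/-- The maximum `k`-cut. -/
noncomputable def mcut (w : Finset V → ℕ) (k : ℕ) : ℝ :=
  ⨆ f : V → Fin k, cutCount w f

/-- The number of edges, with multiplicity. -/
def totalEdges (w : Finset V → ℕ) : ℝ :=
  ∑ e : Finset V, (w e : ℝ)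

/-- The `k`-surplus of an `r`-uniform multihypergraph:
`surp_k(H) = mc_k(H) − (S(r,k)·k!/k^r)·m`. -/
noncomputable def surpk (w : Finset V → ℕ) (r k : ℕ) : ℝ :=
  mcut w k - (stirlingSecond r k * Nat.factorial k : ℝ) / k ^ r * totalEdges w

/-! Let `g` be an optimal `(r-1)`-partition and move every vertex independently with probability
`1/r` into a new `r`-th part. An edge cut by `g` has `r` vertices but only `r - 1` colours, so two
of its vertices `u ≠ v` share a colour; if `u` (or `v`) is the only vertex of the edge that moves,
the edge meets all `r` parts. This has probability `p = 2 · (1/r) · ((r-1)/r)^(r-1)`, so the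
expected `r`-cut is at least `p · mc_{r-1}(H)`.

Write `mc_{r-1}(H) = β m + surp_{r-1}(H)` with `β = S(r,r-1) (r-1)! / (r-1)^r`. Averaging over all
`(r-1)`-partitions gives `surp_{r-1}(H) ≥ 0`; the bound `S(r,r-1) ≥ C(r,2)` gives
`p β ≥ r!/r^r`; and `(1 + 1/(r-1))^(r-1) ≤ e < 4` gives `p ≥ 1/(2r)`. Hence the expectation
is at least `(r!/r^r) m + surp_{r-1}(H)/(2r)`, and it is at most `mc_r(H)`. -/

open Finset Function
open scoped Nat

section Surjections

lemma exists_surjective_collapse_pair {k : ℕ} {s : Finset (Fin (k + 1))} (hs : #s = 2) :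
    ∃ c : Fin (k + 1) → Fin k, Surjective c ∧ (∀ i ∈ s, ∀ j ∈ s, c i = c j) ∧
      ∀ i j, i ≠ j → c i = c j → s = {i, j} := by
  obtain ⟨a, b, hab, rfl⟩ := card_eq_two.1 hs
  refine ⟨fun i => (finSuccAboveEquiv b).symm
      ⟨if i = b then a else i, by split_ifs <;> assumption⟩,
    fun j => ⟨finSuccAboveEquiv b j, ?_⟩, ?_, fun i j hij hc => ?_⟩
  · simp [(finSuccAboveEquiv b j).2]
  · simp only [mem_insert, mem_singleton]
    rintro i (rfl | rfl) j (rfl | rfl) <;> simp [hab]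
  · have := Subtype.ext_iff.1 ((finSuccAboveEquiv b).symm.injective hc)
    split_ifs at this <;> grind [pair_comm]

lemma choose_two_mul_factorial_le_card_surjective (k : ℕ) :
    (k + 1).choose 2 * k ! ≤ #{f : Fin (k + 1) → Fin k | Surjective f} := by
  choose c hc_surj hc_mem hc_pair using
    fun s : {s : Finset (Fin (k + 1)) // #s = 2} => exists_surjective_collapse_pair s.2
  let F : {s : Finset (Fin (k + 1)) // #s = 2} × Equiv.Perm (Fin k) → {f // Surjective f} :=
    fun p => ⟨p.2 ∘ c p.1, p.2.surjective.comp (hc_surj p.1)⟩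
  have hF : Injective F := by
    rintro ⟨s, σ⟩ ⟨t, τ⟩ h
    have hf : σ ∘ c s = τ ∘ c t := congrArg Subtype.val h
    obtain ⟨a, b, hab, hs⟩ := card_eq_two.1 s.2
    have hst : s = t := by
      refine Subtype.ext (hs.trans (hc_pair t a b hab (τ.injective ?_)).symm)
      calc τ (c t a) = σ (c s a) := (congrFun hf a).symm
        _ = σ (c s b) := by rw [hc_mem s a (by simp [hs]) b (by simp [hs])]
        _ = τ (c t b) := congrFun hf b
    subst hst
    refine Prod.ext rfl (Equiv.ext fun j => ?_)
    obtain ⟨i, rfl⟩ := hc_surj s j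
    exact congrFun hf i
  simpa [Fintype.card_perm, ← Fintype.card_subtype] using Fintype.card_le_of_injective F hF

lemma choose_two_le_stirlingSecond (k : ℕ) : (k + 1).choose 2 ≤ stirlingSecond (k + 1) k :=
  (Nat.le_div_iff_mul_le k.factorial_pos).2 (choose_two_mul_factorial_le_card_surjective k)

lemma stirlingSecond_self (r : ℕ) : stirlingSecond r r = 1 := by
  have e : {f : Fin r → Fin r // Surjective f} ≃ Equiv.Perm (Fin r) :=
    (Equiv.subtypeEquivRight fun _ => Finite.surjective_iff_bijective).trans Equiv.bijectiveEquiv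
  rw [stirlingSecond, ← Fintype.card_subtype, Fintype.card_congr e, Fintype.card_perm,
    Fintype.card_fin, Nat.div_self r.factorial_pos]

end Surjections

section Cuts

variable {U : Type*} [Fintype U]

lemma cutCount_nonneg {k : ℕ} (w : Finset U → ℕ) (f : U → Fin k) : 0 ≤ cutCount w f :=
  sum_nonneg fun _ _ => by split <;> positivity

lemma totalEdges_nonneg (w : Finset U → ℕ) : 0 ≤ totalEdges w :=
  sum_nonneg fun _ _ => by positivity

lemma cutCount_le_mcut {k : ℕ} (w : Finset U → ℕ) (f : U → Fin k) :
    cutCount w f ≤ mcut w k :=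
  le_ciSup (Set.finite_range _).bddAbove f

lemma mcut_nonneg {k : ℕ} (hk : 0 < k) (w : Finset U → ℕ) : 0 ≤ mcut w k :=
  (cutCount_nonneg w fun _ => ⟨0, hk⟩).trans (cutCount_le_mcut w _)

lemma exists_cutCount_eq_mcut {k : ℕ} (hk : 0 < k) (w : Finset U → ℕ) :
    ∃ g : U → Fin k, cutCount w g = mcut w k := by
  have : Nonempty (Fin k) := ⟨⟨0, hk⟩⟩
  obtain ⟨g, hg⟩ := Finite.exists_max (cutCount w (k := k))
  exact ⟨g, le_antisymm (cutCount_le_mcut w g) (ciSup_le hg)⟩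

lemma surpk_self (w : Finset U → ℕ) (r : ℕ) :
    surpk w r r = mcut w r - (r ! : ℝ) / r ^ r * totalEdges w := by
  rw [surpk, stirlingSecond_self, Nat.cast_one, one_mul]

end Cuts

section RandomSubset

variable {U : Type*} [Fintype U]

-- The probability that a random subset, containing each vertex independently with
-- probability `x = 1 - y`, equals `T`.
def subsetWeight {R : Type*} [CommSemiring R] (x y : R) (T : Finset U) : R :=
  x ^ #T * y ^ (Fintype.card U - #T)

lemma sum_subsetWeight {R : Type*} [CommSemiring R] {x y : R} (hxy : x + y = 1) :
    ∑ T : Finset U, subsetWeight x y T = 1 := by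
  simp only [subsetWeight, Fintype.sum_pow_mul_eq_add_pow, hxy, one_pow]

lemma sum_subsetWeight_mul_cutCount_le_mcut {k : ℕ} {x y : ℝ} (hx : 0 ≤ x) (hy : 0 ≤ y)
    (hxy : x + y = 1) (w : Finset U → ℕ) (f : Finset U → U → Fin k) :
    ∑ T, subsetWeight x y T * cutCount w (f T) ≤ mcut w k :=
  calc _ ≤ ∑ T, subsetWeight x y T * mcut w k :=
        sum_le_sum fun T _ =>
          mul_le_mul_of_nonneg_left (cutCount_le_mcut w _) (by unfold subsetWeight; positivity)
    _ = mcut w k := by rw [← sum_mul, sum_subsetWeight hxy, one_mul]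

lemma sum_subsetWeight_filter_inter_eq [DecidableEq U] {R : Type*} [CommSemiring R] {x y : R}
    (hxy : x + y = 1) {A e : Finset U} (hA : A ⊆ e) :
    ∑ T with T ∩ e = A, subsetWeight x y T = x ^ #A * y ^ (#e - #A) := by
  have he : #e ≤ Fintype.card U := card_le_univ e
  have hAe : #A ≤ #e := card_le_card hA
  calc ∑ T with T ∩ e = A, subsetWeight x y T
      = ∑ S ∈ (univ \ e).powerset,
          x ^ #A * y ^ (#e - #A) * (x ^ #S * y ^ (#(univ \ e) - #S)) := by
        refine sum_nbij' (· \ e) (A ∪ ·) (fun T _ => by simp [subset_iff]) ?_ ?_ ?_ ?_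
        · intro S hS
          simp only [mem_powerset, mem_filter, mem_univ, true_and] at hS ⊢
          ext v
          grind
        · intro T hT
          simp only [mem_filter, mem_univ, true_and] at hT
          ext v
          grind
        · intro S hS
          simp only [mem_powerset] at hS
          ext v
          grind
        · intro T hT
          simp only [mem_filter, mem_univ, true_and] at hT
          have hT' : #T = #A + #(T \ e) := by rw [← hT, card_inter_add_card_sdiff]
          have hTe : #(T \ e) ≤ #(univ \ e) :=
            card_le_card (sdiff_subset_sdiff (subset_univ T) le_rfl)
          rw [card_univ_sdiff] at hTe ⊢
          rw [subsetWeight, hT', show Fintype.card U - (#A + #(T \ e)) =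
            (#e - #A) + (Fintype.card U - #e - #(T \ e)) by omega, pow_add, pow_add]
          ring
    _ = x ^ #A * y ^ (#e - #A) := by rw [← mul_sum, sum_pow_mul_eq_add_pow, hxy, one_pow, mul_one]

end RandomSubset

section Averaging

lemma card_filter_forall_exists_mem_eq {β : Type*} [Fintype β] [DecidableEq β] (e : Finset V) :
    #{f : V → β | ∀ b, ∃ v ∈ e, f v = b} =
      #{g : Fin #e → β | Surjective g} * Fintype.card β ^ (Fintype.card V - #e) := by
  have hsplit : {f : V → β // ∀ b, ∃ v ∈ e, f v = b} ≃
      {g : e → β // Surjective g} × ({v // v ∉ e} → β) :=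
    ((Equiv.piEquivPiSubtypeProd (· ∈ e) fun _ => β).subtypeEquiv fun f => by
      simp [Surjective, Equiv.piEquivPiSubtypeProd]).trans
      Equiv.prodSubtypeFstEquivSubtypeProd
  have hrelabel : {g : e → β // Surjective g} ≃ {g : Fin #e → β // Surjective g} :=
    (Equiv.arrowCongr e.equivFin (Equiv.refl β)).subtypeEquiv fun g => by
      simp [Equiv.arrowCongr]
  rw [← Fintype.card_subtype, ← Fintype.card_subtype, Fintype.card_congr hsplit,
    Fintype.card_prod, Fintype.card_congr hrelabel, Fintype.card_fun, Fintype.card_subtype_compl,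
    Fintype.card_coe]

lemma sum_cutCount_eq {k r : ℕ} (w : Finset V → ℕ) (hunif : ∀ e, w e ≠ 0 → #e = r) :
    ∑ f : V → Fin k, cutCount w f =
      (#{g : Fin r → Fin k | Surjective g} * k ^ (Fintype.card V - r) : ℕ) * totalEdges w := by
  simp only [cutCount, totalEdges]
  rw [sum_comm, mul_sum]
  refine sum_congr rfl fun e _ => ?_
  rw [sum_ite, sum_const_zero, add_zero, sum_const, nsmul_eq_mul, mul_comm]
  by_cases hwe : w e = 0
  · simp [hwe]
  · have h := card_filter_forall_exists_mem_eq (β := Fin k) e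
    rw [hunif e hwe, Fintype.card_fin] at h
    rw [mul_comm, ← h]
    congr

lemma card_surjective_mul_totalEdges_le {k r : ℕ} (hk : 0 < k) (w : Finset V → ℕ)
    (hunif : ∀ e, w e ≠ 0 → #e = r) :
    (#{g : Fin r → Fin k | Surjective g} : ℝ) * totalEdges w ≤ k ^ r * mcut w k := by
  set n := Fintype.card V
  have hkpos : (0 : ℝ) < k := by exact_mod_cast hk
  have hsum_le : ∑ f : V → Fin k, cutCount w f ≤ (k : ℝ) ^ n * mcut w k := by
    simpa [n] using sum_le_sum fun f (_ : f ∈ univ) => cutCount_le_mcut w f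
  -- `n - r` truncates when `n < r`; the bound `k ^ n ≤ k ^ (n - r) * k ^ r` covers both cases.
  have hpow : (k : ℝ) ^ n ≤ k ^ (n - r) * k ^ r := by
    rw [← pow_add]
    exact pow_le_pow_right₀ (by exact_mod_cast hk) (by omega)
  refine le_of_mul_le_mul_left ?_ (pow_pos hkpos (n - r))
  calc (k : ℝ) ^ (n - r) * (#{g : Fin r → Fin k | Surjective g} * totalEdges w)
      = ∑ f : V → Fin k, cutCount w f := by rw [sum_cutCount_eq w hunif]; push_cast; ring
    _ ≤ k ^ (n - r) * k ^ r * mcut w k :=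
        hsum_le.trans (mul_le_mul_of_nonneg_right hpow (mcut_nonneg hk w))
    _ = _ := by ring

lemma surpk_nonneg {k r : ℕ} (hk : 0 < k) (w : Finset V → ℕ)
    (hunif : ∀ e, w e ≠ 0 → #e = r) :
    0 ≤ surpk w r k := by
  have hstirling : (stirlingSecond r k * k ! : ℝ) ≤ #{g : Fin r → Fin k | Surjective g} := by
    exact_mod_cast Nat.div_mul_le_self _ _
  have hpow : (0 : ℝ) < k ^ r := pow_pos (by exact_mod_cast hk) r
  rw [surpk, sub_nonneg, div_mul_eq_mul_div, div_le_iff₀ hpow, mul_comm (mcut w k)]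
  exact (mul_le_mul_of_nonneg_right hstirling (totalEdges_nonneg w)).trans
    (card_surjective_mul_totalEdges_le hk w hunif)

end Averaging

section NewPart

def moveToNewPart {V : Type*} [DecidableEq V] {k : ℕ} (g : V → Fin k) (T : Finset V) :
    V → Fin (k + 1) :=
  fun v => if v ∈ T then Fin.last k else (g v).castSucc

-- `u` alone moves to the new part, and its old part is still met by `v`.
lemma moveToNewPart_cuts {V : Type*} [DecidableEq V] {k : ℕ} {g : V → Fin k}
    {e T : Finset V} {u v : V} (hcut : ∀ j, ∃ x ∈ e, g x = j) (hT : T ∩ e = {u})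
    (hv : v ∈ e) (hvu : v ≠ u) (hg : g v = g u) :
    ∀ j, ∃ x ∈ e, moveToNewPart g T x = j := by
  have hmem : ∀ x ∈ e, x ∈ T ↔ x = u := fun x hx => by
    rw [← mem_singleton, ← hT, mem_inter, and_iff_left hx]
  have hu : u ∈ e := mem_of_mem_inter_right (hT ▸ mem_singleton_self u)
  intro j
  induction j using Fin.lastCases with
  | last => exact ⟨u, hu, by simp [moveToNewPart, (hmem u hu).2 rfl]⟩
  | cast i =>
    obtain ⟨x, hx, rfl⟩ := hcut i
    by_cases hxu : x = u
    · exact ⟨v, hv, by simp [moveToNewPart, hmem v hv, hvu, hg, hxu]⟩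
    · exact ⟨x, hx, by simp [moveToNewPart, hmem x hx, hxu]⟩

lemma two_mul_mul_pow_le_sum_subsetWeight_moveToNewPart_cuts {k : ℕ} {x y : ℝ} (hx : 0 ≤ x)
    (hy : 0 ≤ y) (hxy : x + y = 1) {g : V → Fin k} {e : Finset V} (he : #e = k + 1)
    (hcut : ∀ j, ∃ v ∈ e, g v = j) :
    2 * x * y ^ k ≤
      ∑ T with ∀ j, ∃ v ∈ e, moveToNewPart g T v = j, subsetWeight x y T := by
  obtain ⟨u, hu, v, hv, huv, hg⟩ := exists_ne_map_eq_of_card_lt_of_maps_to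
    (s := e) (t := univ) (by simp [he]) fun x _ => mem_univ (g x)
  have hsingle : ∀ a ∈ e, ∑ T with T ∩ e = {a}, subsetWeight x y T = x * y ^ k :=
    fun a ha => by
      rw [sum_subsetWeight_filter_inter_eq hxy (singleton_subset_iff.2 ha), card_singleton, he,
        pow_one, Nat.add_sub_cancel]
  have hdisj : Disjoint (univ.filter (· ∩ e = {u})) (univ.filter (· ∩ e = {v})) :=
    disjoint_filter.2 fun T _ hTu hTv => huv (singleton_inj.1 (hTu.symm.trans hTv))
  calc 2 * x * y ^ k
      = ∑ T ∈ univ.filter (· ∩ e = {u}) ∪ univ.filter (· ∩ e = {v}),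
          subsetWeight x y T := by
        rw [sum_union hdisj, hsingle u hu, hsingle v hv]; ring
    _ ≤ _ := by
        refine sum_le_sum_of_subset_of_nonneg ?_ fun _ _ _ => by
          unfold subsetWeight; positivity
        intro T hT
        simp only [mem_union, mem_filter, mem_univ, true_and] at hT ⊢
        rcases hT with hT | hT
        · exact moveToNewPart_cuts hcut hT hv huv.symm hg.symm
        · exact moveToNewPart_cuts hcut hT hu huv hg

lemma mul_cutCount_le_sum_cutCount_moveToNewPart {k : ℕ} {x y : ℝ} (hx : 0 ≤ x) (hy : 0 ≤ y)
    (hxy : x + y = 1) {w : Finset V → ℕ} (hunif : ∀ e, w e ≠ 0 → #e = k + 1)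
    (g : V → Fin k) :
    2 * x * y ^ k * cutCount w g ≤
      ∑ T, subsetWeight x y T * cutCount w (moveToNewPart g T) := by
  simp only [cutCount, mul_sum]
  rw [sum_comm]
  refine sum_le_sum fun e _ => ?_
  simp only [mul_ite, mul_zero]
  rw [← sum_filter, ← sum_mul]
  split_ifs with hcut
  · by_cases hwe : w e = 0
    · simp [hwe]
    · exact mul_le_mul_of_nonneg_right
        (two_mul_mul_pow_le_sum_subsetWeight_moveToNewPart_cuts hx hy hxy (hunif e hwe) hcut)
        (by positivity)
  · exact mul_nonneg (sum_nonneg fun _ _ => by unfold subsetWeight; positivity)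
      (Nat.cast_nonneg _)

end NewPart

section Estimates

lemma one_div_two_mul_le_two_mul_one_div_mul_pow {k : ℕ} (hk : 0 < k) :
    1 / (2 * ((k : ℝ) + 1)) ≤ 2 * (1 / (k + 1)) * (k / (k + 1)) ^ k := by
  have hfour : (1 + (k : ℝ)⁻¹) ^ k ≤ 4 :=
    Real.one_add_inv_pow_le_exp.trans (Real.exp_one_lt_d9.le.trans (by norm_num))
  have hinv : ((k : ℝ) / (k + 1)) ^ k * (1 + (k : ℝ)⁻¹) ^ k = 1 := by
    have hkpos : (0 : ℝ) < k := by exact_mod_cast hk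
    rw [← mul_pow]; field_simp; simp
  have hquarter : 1 / 4 ≤ ((k : ℝ) / (k + 1)) ^ k := by
    have : 0 < (1 + (k : ℝ)⁻¹) ^ k := by positivity
    rw [div_le_iff₀ (by norm_num : (0 : ℝ) < 4)]
    nlinarith
  rw [div_le_iff₀ (by positivity)]
  field_simp
  nlinarith

lemma factorial_div_pow_le {k S : ℕ} (hk : 0 < k) (hS : (k + 1).choose 2 ≤ S) :
    ((k + 1)! : ℝ) / (k + 1) ^ (k + 1) ≤
      2 * (1 / (k + 1)) * (k / (k + 1)) ^ k * (S * k ! / k ^ (k + 1)) := by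
  have hkpos : (0 : ℝ) < k := by exact_mod_cast hk
  have hS' : ((k : ℝ) + 1) * k ≤ 2 * S := by
    have : (((k + 1).choose 2 : ℕ) : ℝ) ≤ S := by exact_mod_cast hS
    rw [Nat.cast_choose_two] at this
    push_cast at this
    linarith
  rw [Nat.factorial_succ, div_pow]
  push_cast
  field_simp
  have key :=
    mul_le_mul_of_nonneg_right hS' (by positivity : (0 : ℝ) ≤ (k + 1) ^ (k + 1) * k ^ k)
  calc _ = ((k : ℝ) + 1) * k * ((k + 1) ^ (k + 1) * k ^ k) := by ring
    _ ≤ _ := key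
    _ = _ := by ring

end Estimates

lemma factorial_div_pow_mul_totalEdges_add_le_sum_cutCount_moveToNewPart {k : ℕ} (hk : 0 < k)
    {w : Finset V → ℕ} (hunif : ∀ e, w e ≠ 0 → #e = k + 1) {g : V → Fin k}
    (hg : cutCount w g = mcut w k) :
    ((k + 1)! : ℝ) / ((k : ℝ) + 1) ^ (k + 1) * totalEdges w
        + 1 / (2 * ((k : ℝ) + 1)) * surpk w (k + 1) k ≤
      ∑ T, subsetWeight (1 / ((k : ℝ) + 1)) (k / (k + 1)) T *
        cutCount w (moveToNewPart g T) := by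
  have hxy : 1 / ((k : ℝ) + 1) + k / (k + 1) = 1 := by field_simp; ring
  have hcut := mul_cutCount_le_sum_cutCount_moveToNewPart (by positivity) (by positivity) hxy
    hunif g
  have hp := one_div_two_mul_le_two_mul_one_div_mul_pow hk
  have hpβ := factorial_div_pow_le hk (choose_two_le_stirlingSecond k)
  have hsurp := surpk_nonneg hk w hunif
  rw [hg] at hcut
  unfold surpk at *
  -- with `p = 2xy^k` and `β = S k!/k^(k+1)`: `p · mc = pβ · m + p · surp`, and `pβ ≥ r!/r^r`,
  -- `p ≥ 1/(2r)`, `surp ≥ 0`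
  nlinarith [mul_le_mul_of_nonneg_right hpβ (totalEdges_nonneg w),
    mul_le_mul_of_nonneg_right hp hsurp]

/-- For an `r`-uniform multihypergraph `H` (`r ≥ 2`): `2r·surp_r(H) ≥ surp_{r−1}(H)`.
More precisely, if `g` is an `(r−1)`-partition achieving `mc_{r−1}(H)`, then moving each
vertex independently with probability `1/r` to a new `r`-th part yields an `r`-partition
whose expected number of cut edges is at least `(r!/r^r)·e(H) + (1/(2r))·surp_{r−1}(H)`. -/
theorem stmt5 (r : ℕ) (hr : 2 ≤ r) (w : Finset V → ℕ)
    (hunif : ∀ e, w e ≠ 0 → e.card = r) :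
    2 * r * surpk w r r ≥ surpk w r (r - 1) ∧
    ∀ g : V → Fin (r - 1), cutCount w g = mcut w (r - 1) →
      ∑ T : Finset V,
          ((1 / (r : ℝ)) ^ T.card * (((r : ℝ) - 1) / r) ^ (Fintype.card V - T.card)) *
            cutCount w
              (fun v => if v ∈ T then (⟨r - 1, by omega⟩ : Fin r)
                else Fin.castLE (by omega) (g v))
        ≥ (Nat.factorial r : ℝ) / r ^ r * totalEdges w
            + 1 / (2 * r) * surpk w r (r - 1) := by
  obtain ⟨k, rfl⟩ : ∃ k, r = k + 1 := ⟨r - 1, by omega⟩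
  have hk : 0 < k := by omega
  have hexpected := fun g (hg : cutCount w g = mcut w k) =>
    factorial_div_pow_mul_totalEdges_add_le_sum_cutCount_moveToNewPart hk hunif hg
  refine ⟨?_, fun g hg => ?_⟩
  · obtain ⟨g, hg⟩ := exists_cutCount_eq_mcut hk w
    have hmain := (hexpected g hg).trans (sum_subsetWeight_mul_cutCount_le_mcut (by positivity)
      (by positivity) (by field_simp; ring) w (moveToNewPart g))
    show surpk w (k + 1) k ≤ 2 * ((k + 1 : ℕ) : ℝ) * surpk w (k + 1) (k + 1)
    rw [surpk_self, Nat.cast_add_one]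
    calc surpk w (k + 1) k
        = 2 * ((k : ℝ) + 1) * (1 / (2 * ((k : ℝ) + 1)) * surpk w (k + 1) k) := by field_simp
      _ ≤ _ := by gcongr; linarith
  · simp only [Nat.cast_add_one, add_sub_cancel_right]
    exact hexpected g hg
end

section
/- For any symmetric matrices A, B ∈ ℝ^{n×n} and indices i, j with i + j − 1 ≤ n, λ_{i+j−1}(A+B) ≤ λ_i(A) + λ_j(B), where λ_k(M) denotes the k-th largest eigenvalue of M. -/
/-!
A dimension count in the style of Courant–Fischer. The eigenvectors of `A` with eigenvalue
`≤ λ_i(A)` span a space of dimension `n - i + 1` on which `⟪x, A x⟫ ≤ λ_i(A) ‖x‖²`; likewise for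
`B` and `j`. The eigenvectors of `A + B` with eigenvalue `≥ λ_{i+j-1}(A + B)` span a space of
dimension `i + j - 1` on which `⟪x, (A + B) x⟫ ≥ λ_{i+j-1}(A + B) ‖x‖²`. The three dimensions add
up to `2n + 1`, so the three spaces share a nonzero vector, and on it the two bounds for
`⟪x, (A + B) x⟫` give the inequality.

`Tuple.sort` sorts increasingly, so `eigDesc hA k` is the value at position `k.rev` of the sorted
eigenvalues.
-/
/-- The `i`-th largest eigenvalue (0-indexed) of a real symmetric matrix:
the eigenvalues sorted in decreasing order. -/
noncomputable def eigDesc {n : ℕ} {A : Matrix (Fin n) (Fin n) ℝ}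
    (hA : A.IsHermitian) : Fin n → ℝ :=
  fun i => (hA.eigenvalues ∘ Tuple.sort hA.eigenvalues) i.rev

open Module Submodule Finset

namespace Submodule

variable {K V : Type*} [DivisionRing K] [AddCommGroup V] [Module K V] [FiniteDimensional K V]

lemma finrank_add_finrank_le_finrank_inf_add (U W : Submodule K V) :
    finrank K U + finrank K W ≤ finrank K ↥(U ⊓ W) + finrank K V := by
  rw [← finrank_sup_add_finrank_inf_eq, add_comm]
  exact Nat.add_le_add_left (finrank_le _) _

lemma exists_mem_inf_inf_ne_zero_of_finrank_lt (U₁ U₂ U₃ : Submodule K V)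
    (h : 2 * finrank K V < finrank K U₁ + finrank K U₂ + finrank K U₃) :
    ∃ x ∈ U₁ ⊓ U₂ ⊓ U₃, x ≠ 0 := by
  have h₁₂ := finrank_add_finrank_le_finrank_inf_add U₁ U₂
  have h₁₂₃ := finrank_add_finrank_le_finrank_inf_add (U₁ ⊓ U₂) U₃
  obtain ⟨x, hx⟩ :=
    finrank_pos_iff_exists_ne_zero.mp (show 0 < finrank K ↥(U₁ ⊓ U₂ ⊓ U₃) by omega)
  exact ⟨x, x.2, by simpa using hx⟩

end Submodule

namespace OrthonormalBasis

variable {ι E : Type*} [Fintype ι] [NormedAddCommGroup E] [InnerProductSpace ℝ E]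
  (b : OrthonormalBasis ι ℝ E)

lemma finrank_span_image (S : Finset ι) : finrank ℝ (span ℝ (b '' S)) = #S := by
  rw [Set.image_eq_range]
  exact (finrank_span_eq_card (b.orthonormal.linearIndependent.comp _ Subtype.val_injective)).trans
    (Fintype.card_coe S)

lemma inner_eq_zero_of_mem_span_image {S : Set ι} {x : E} (hx : x ∈ span ℝ (b '' S)) {k : ι}
    (hk : k ∉ S) : inner ℝ (b k) x = 0 := by
  rw [← b.coe_toBasis, Basis.mem_span_image] at hx
  rw [← b.repr_apply_apply, ← b.coe_toBasis_repr_apply]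
  exact Finsupp.notMem_support_iff.mp fun h => hk (hx h)

variable {b} {T : E →ₗ[ℝ] E} {μ : ι → ℝ}

lemma inner_apply_eq_sum (hT : ∀ k, T (b k) = μ k • b k) (x : E) :
    inner ℝ x (T x) = ∑ k, μ k * inner ℝ (b k) x ^ 2 := by
  have hTx : T x = ∑ k, (μ k * inner ℝ (b k) x) • b k := by
    conv_lhs => rw [← b.sum_repr' x]
    simp only [map_sum, map_smul, hT, smul_smul, mul_comm]
  simp only [hTx, inner_sum, real_inner_smul_right, real_inner_comm x, sq, mul_assoc]

lemma inner_apply_le_of_mem_span_image (hT : ∀ k, T (b k) = μ k • b k) {S : Set ι} {c : ℝ}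
    (hc : ∀ k ∈ S, μ k ≤ c) {x : E} (hx : x ∈ span ℝ (b '' S)) :
    inner ℝ x (T x) ≤ c * ‖x‖ ^ 2 := by
  rw [inner_apply_eq_sum hT, ← b.sum_sq_inner_right, mul_sum]
  refine sum_le_sum fun k _ => ?_
  by_cases hk : k ∈ S
  · exact mul_le_mul_of_nonneg_right (hc k hk) (sq_nonneg _)
  · simp [b.inner_eq_zero_of_mem_span_image hx hk]

lemma le_inner_apply_of_mem_span_image (hT : ∀ k, T (b k) = μ k • b k) {S : Set ι} {c : ℝ}
    (hc : ∀ k ∈ S, c ≤ μ k) {x : E} (hx : x ∈ span ℝ (b '' S)) :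
    c * ‖x‖ ^ 2 ≤ inner ℝ x (T x) := by
  rw [inner_apply_eq_sum hT, ← b.sum_sq_inner_right, mul_sum]
  refine sum_le_sum fun k _ => ?_
  by_cases hk : k ∈ S
  · exact mul_le_mul_of_nonneg_right (hc k hk) (sq_nonneg _)
  · simp [b.inner_eq_zero_of_mem_span_image hx hk]

end OrthonormalBasis

section Weyl

variable {ι E : Type*} [Fintype ι] [NormedAddCommGroup E] [InnerProductSpace ℝ E]
  [FiniteDimensional ℝ E]

theorem le_add_of_eigenbases_of_finrank_lt {T₁ T₂ : E →ₗ[ℝ] E} {b₁ b₂ b₃ : OrthonormalBasis ι ℝ E}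
    {μ₁ μ₂ μ₃ : ι → ℝ} (h₁ : ∀ k, T₁ (b₁ k) = μ₁ k • b₁ k) (h₂ : ∀ k, T₂ (b₂ k) = μ₂ k • b₂ k)
    (h₃ : ∀ k, (T₁ + T₂) (b₃ k) = μ₃ k • b₃ k) {S₁ S₂ S₃ : Finset ι}
    (hS : 2 * finrank ℝ E < #S₁ + #S₂ + #S₃) {c₁ c₂ c₃ : ℝ} (hc₁ : ∀ k ∈ S₁, μ₁ k ≤ c₁)
    (hc₂ : ∀ k ∈ S₂, μ₂ k ≤ c₂) (hc₃ : ∀ k ∈ S₃, c₃ ≤ μ₃ k) :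
    c₃ ≤ c₁ + c₂ := by
  obtain ⟨x, ⟨⟨hx₁, hx₂⟩, hx₃⟩, hx₀⟩ := exists_mem_inf_inf_ne_zero_of_finrank_lt
    (span ℝ (b₁ '' S₁)) (span ℝ (b₂ '' S₂)) (span ℝ (b₃ '' S₃))
    (by simpa only [OrthonormalBasis.finrank_span_image] using hS)
  refine le_of_mul_le_mul_right ?_ (by positivity : 0 < ‖x‖ ^ 2)
  calc c₃ * ‖x‖ ^ 2 ≤ inner ℝ x ((T₁ + T₂) x) :=
        OrthonormalBasis.le_inner_apply_of_mem_span_image h₃ hc₃ hx₃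
    _ = inner ℝ x (T₁ x) + inner ℝ x (T₂ x) := inner_add_right _ _ _
    _ ≤ c₁ * ‖x‖ ^ 2 + c₂ * ‖x‖ ^ 2 := add_le_add
        (OrthonormalBasis.inner_apply_le_of_mem_span_image h₁ hc₁ hx₁)
        (OrthonormalBasis.inner_apply_le_of_mem_span_image h₂ hc₂ hx₂)
    _ = (c₁ + c₂) * ‖x‖ ^ 2 := by ring

end Weyl

namespace Tuple

variable {n : ℕ} {α : Type*} [LinearOrder α]

lemma exists_card_eq_forall_le_sort (f : Fin n → α) (k : Fin n) :
    ∃ S : Finset (Fin n), #S = k + 1 ∧ ∀ m ∈ S, f m ≤ f (sort f k) := by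
  refine ⟨(Iic k).image (sort f), ?_, ?_⟩
  · rw [card_image_of_injective _ (sort f).injective, Fin.card_Iic]
  · simp only [mem_image, mem_Iic, forall_exists_index, and_imp]
    rintro _ m hm rfl
    exact monotone_sort f hm

lemma exists_card_eq_forall_sort_le (f : Fin n → α) (k : Fin n) :
    ∃ S : Finset (Fin n), #S = n - k ∧ ∀ m ∈ S, f (sort f k) ≤ f m := by
  refine ⟨(Ici k).image (sort f), ?_, ?_⟩
  · rw [card_image_of_injective _ (sort f).injective, Fin.card_Ici]
  · simp only [mem_image, mem_Ici, forall_exists_index, and_imp]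
    rintro _ m hm rfl
    exact monotone_sort f hm

end Tuple

namespace Matrix.IsHermitian

lemma toEuclideanLin_eigenvectorBasis {m : Type*} [Fintype m] [DecidableEq m] {A : Matrix m m ℝ}
    (hA : A.IsHermitian) (k : m) :
    toEuclideanLin A (hA.eigenvectorBasis k) = hA.eigenvalues k • hA.eigenvectorBasis k :=
  congrArg (WithLp.equiv 2 (m → ℝ)).symm (hA.mulVec_eigenvectorBasis k)

variable {n : ℕ} {A : Matrix (Fin n) (Fin n) ℝ}

lemma exists_card_eq_forall_eigenvalues_le_eigDesc (hA : A.IsHermitian) (k : Fin n) :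
    ∃ S : Finset (Fin n), #S = n - k ∧ ∀ m ∈ S, hA.eigenvalues m ≤ eigDesc hA k := by
  obtain ⟨S, hS, h⟩ := Tuple.exists_card_eq_forall_le_sort hA.eigenvalues k.rev
  exact ⟨S, by rw [hS, Fin.val_rev]; omega, h⟩

lemma exists_card_eq_forall_eigDesc_le_eigenvalues (hA : A.IsHermitian) (k : Fin n) :
    ∃ S : Finset (Fin n), #S = k + 1 ∧ ∀ m ∈ S, eigDesc hA k ≤ hA.eigenvalues m := by
  obtain ⟨S, hS, h⟩ := Tuple.exists_card_eq_forall_sort_le hA.eigenvalues k.rev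
  exact ⟨S, by rw [hS, Fin.val_rev]; omega, h⟩

end Matrix.IsHermitian

/-- Weyl's inequality: for real symmetric `A, B ∈ ℝ^{n×n}` and `1 ≤ i`, `1 ≤ j` with
`i + j − 1 ≤ n`, we have `λ_{i+j−1}(A+B) ≤ λ_i(A) + λ_j(B)` (eigenvalues in
decreasing order, 1-indexed). -/
theorem stmt6 {n : ℕ} (A B : Matrix (Fin n) (Fin n) ℝ)
    (hA : A.IsHermitian) (hB : B.IsHermitian)
    (i j : ℕ) (hi : 1 ≤ i) (hj : 1 ≤ j) (hij : i + j - 1 ≤ n) :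
    eigDesc (hA.add hB) ⟨i + j - 2, by omega⟩ ≤
      eigDesc hA ⟨i - 1, by omega⟩ + eigDesc hB ⟨j - 1, by omega⟩ := by
  obtain ⟨SA, hSA, hcA⟩ := hA.exists_card_eq_forall_eigenvalues_le_eigDesc ⟨i - 1, by omega⟩
  obtain ⟨SB, hSB, hcB⟩ := hB.exists_card_eq_forall_eigenvalues_le_eigDesc ⟨j - 1, by omega⟩
  obtain ⟨SC, hSC, hcC⟩ :=
    (hA.add hB).exists_card_eq_forall_eigDesc_le_eigenvalues ⟨i + j - 2, by omega⟩
  have hAB := (hA.add hB).toEuclideanLin_eigenvectorBasis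
  rw [map_add] at hAB
  refine le_add_of_eigenbases_of_finrank_lt hA.toEuclideanLin_eigenvectorBasis
    hB.toEuclideanLin_eigenvectorBasis hAB ?_ hcA hcB hcC
  simp only [finrank_euclideanSpace_fin, hSA, hSB, hSC]
  omega
end

section
/- Let A ∈ ℝ^{n×n} be symmetric with tr(A) = 0. Then the semidefinite relaxation surp*(A) = max over PSD matrices X with diagonal entries ≤ 1 of −(1/2)⟨A,X⟩ satisfies surp*(A) ≥ (1/4)ℰ(A), where ℰ(A) is the sum of absolute values of the eigenvalues of A. -/
/-- The energy of a real symmetric matrix: the sum of the absolute values of its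
eigenvalues (with multiplicity). -/
noncomputable def energy {n : ℕ} {A : Matrix (Fin n) (Fin n) ℝ}
    (hA : A.IsHermitian) : ℝ :=
  ∑ i, |hA.eigenvalues i|

/-- The semidefinite relaxation of the surplus:
`surp*(A) = sup { −(1/2)⟨A,X⟩ : X PSD, X(i,i) ≤ 1 }`. -/
noncomputable def surpStar {n : ℕ} (A : Matrix (Fin n) (Fin n) ℝ) : ℝ :=
  sSup {t : ℝ | ∃ X : Matrix (Fin n) (Fin n) ℝ, X.PosSemidef ∧ (∀ i, X i i ≤ 1) ∧
    t = -(1 / 2) * ∑ i, ∑ j, A i j * X i j}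

/-!
Take for `X` the orthogonal projection onto the span of the eigenvectors of `A` with negative
eigenvalue. Both `X` and `1 - X` are positive semidefinite, so `X` is feasible, and
`⟨A, X⟩ = tr (A X)` is the sum of the negative eigenvalues, i.e. `(tr A - ℰ(A)) / 2`.
The supremum is finite because a feasible `X` has all entries in `[-1, 1]`.
-/

open Matrix Unitary
open scoped ComplexOrder

namespace Matrix.IsHermitian

variable {𝕜 n : Type*} [RCLike 𝕜] [Fintype n] [DecidableEq n] {A : Matrix n n 𝕜}
  (hA : A.IsHermitian)

noncomputable def spectralMatrix (d : n → ℝ) : Matrix n n 𝕜 :=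
  conjStarAlgAut 𝕜 _ hA.eigenvectorUnitary (diagonal (RCLike.ofReal ∘ d))

lemma spectralMatrix_eigenvalues : hA.spectralMatrix hA.eigenvalues = A :=
  hA.spectral_theorem.symm

lemma spectralMatrix_mul (d e : n → ℝ) :
    hA.spectralMatrix d * hA.spectralMatrix e = hA.spectralMatrix (d * e) := by
  simp only [spectralMatrix, ← map_mul, diagonal_mul_diagonal]
  congr; ext; simp

lemma spectralMatrix_one : hA.spectralMatrix 1 = 1 := by
  simp [spectralMatrix, Function.comp_def]

lemma spectralMatrix_sub (d e : n → ℝ) :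
    hA.spectralMatrix (d - e) = hA.spectralMatrix d - hA.spectralMatrix e := by
  simp only [spectralMatrix, ← map_sub, diagonal_sub]
  congr; ext; simp

lemma trace_spectralMatrix (d : n → ℝ) : (hA.spectralMatrix d).trace = ∑ i, (d i : 𝕜) := by
  rw [spectralMatrix, conjStarAlgAut_apply, trace_mul_cycle, coe_star_mul_self, one_mul,
    trace_diagonal]; rfl

lemma posSemidef_spectralMatrix {d : n → ℝ} (hd : 0 ≤ d) : (hA.spectralMatrix d).PosSemidef := by
  rw [spectralMatrix, conjStarAlgAut_apply, star_eq_conjTranspose]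
  exact (PosSemidef.diagonal fun i => by simpa using hd i).mul_mul_conjTranspose_same _

lemma spectralMatrix_apply_self_le_one {d : n → ℝ} (hd : d ≤ 1) (i : n) :
    hA.spectralMatrix d i i ≤ 1 := by
  have := (hA.posSemidef_spectralMatrix (sub_nonneg.2 hd)).diag_nonneg (i := i)
  rwa [spectralMatrix_sub, spectralMatrix_one, sub_apply, one_apply_eq, sub_nonneg] at this

noncomputable def negSpectralProjection : Matrix n n 𝕜 :=
  hA.spectralMatrix ({i | hA.eigenvalues i < 0}.indicator 1)

lemma posSemidef_negSpectralProjection : hA.negSpectralProjection.PosSemidef :=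
  hA.posSemidef_spectralMatrix (Set.indicator_nonneg fun _ _ => zero_le_one)

lemma negSpectralProjection_apply_self_le_one (i : n) : hA.negSpectralProjection i i ≤ 1 :=
  hA.spectralMatrix_apply_self_le_one (Set.indicator_le_self' fun _ _ => zero_le_one) i

lemma trace_mul_negSpectralProjection :
    (A * hA.negSpectralProjection).trace = ∑ i, ((min (hA.eigenvalues i) 0 : ℝ) : 𝕜) := by
  conv_lhs => enter [1, 1]; rw [← hA.spectralMatrix_eigenvalues]
  rw [negSpectralProjection, spectralMatrix_mul, trace_spectralMatrix]
  congr! 2 with i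
  by_cases hi : hA.eigenvalues i < 0 <;> simp [hi, le_of_lt, not_lt.1]

end Matrix.IsHermitian

lemma Matrix.PosSemidef.abs_apply_le_one {n : Type*} [Fintype n] {X : Matrix n n ℝ}
    (hX : X.PosSemidef) (hd : ∀ i, X i i ≤ 1) (i j : n) : |X i j| ≤ 1 := by
  classical
  have quad (c : ℝ) : 0 ≤ X i i + 2 * c * X i j + c ^ 2 * X j j := by
    have h := hX.dotProduct_mulVec_nonneg (Pi.single i 1 + Pi.single j c)
    have hsym : X j i = X i j := by simpa using congrFun (congrFun hX.isHermitian i) j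
    simp only [star_trivial, mulVec_add, dotProduct_add, add_dotProduct, mulVec_single,
      single_dotProduct, Pi.smul_apply, op_smul_eq_mul, col_apply, one_mul, hsym] at h
    linarith
  rw [abs_le]
  constructor <;> linarith [quad 1, quad (-1), hd i, hd j]

lemma abs_sum_sum_mul_le {n : Type*} [Fintype n] (A : Matrix n n ℝ)
    {X : Matrix n n ℝ} (hX : X.PosSemidef) (hd : ∀ i, X i i ≤ 1) :
    |∑ i, ∑ j, A i j * X i j| ≤ ∑ i, ∑ j, |A i j| := by
  refine (Finset.abs_sum_le_sum_abs _ _).trans (Finset.sum_le_sum fun i _ => ?_)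
  refine (Finset.abs_sum_le_sum_abs _ _).trans (Finset.sum_le_sum fun j _ => ?_)
  rw [abs_mul]
  exact mul_le_of_le_one_right (abs_nonneg _) (hX.abs_apply_le_one hd i j)

lemma le_surpStar {n : ℕ} (A : Matrix (Fin n) (Fin n) ℝ) {X : Matrix (Fin n) (Fin n) ℝ}
    (hX : X.PosSemidef) (hd : ∀ i, X i i ≤ 1) :
    -(1 / 2) * ∑ i, ∑ j, A i j * X i j ≤ surpStar A := by
  refine le_csSup ⟨(1 / 2) * ∑ i, ∑ j, |A i j|, ?_⟩ ⟨X, hX, hd, rfl⟩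
  rintro t ⟨Y, hY, hYd, rfl⟩
  have := neg_le_of_abs_le (abs_sum_sum_mul_le A hY hYd)
  linarith

lemma sum_min_zero_eq {ι : Type*} (s : Finset ι) (f : ι → ℝ) :
    ∑ i ∈ s, min (f i) 0 = (∑ i ∈ s, f i - ∑ i ∈ s, |f i|) / 2 := by
  rw [← Finset.sum_sub_distrib, Finset.sum_div]
  refine Finset.sum_congr rfl fun i _ => ?_
  rcases le_total (f i) 0 with h | h <;> simp [h, abs_of_nonpos, abs_of_nonneg]

theorem energy_sub_trace_le_surpStar {n : ℕ} {A : Matrix (Fin n) (Fin n) ℝ}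
    (hA : A.IsHermitian) : (energy hA - A.trace) / 4 ≤ surpStar A := by
  have hP := hA.posSemidef_negSpectralProjection
  have hinner : ∑ i, ∑ j, A i j * hA.negSpectralProjection i j
      = (A.trace - energy hA) / 2 := by
    calc _ = (A * hA.negSpectralProjectionᵀ).trace := sum_hadamard_eq _ _
      _ = ∑ i, min (hA.eigenvalues i) 0 := by
        rw [← conjTranspose_eq_transpose_of_trivial, hP.isHermitian.eq,
          hA.trace_mul_negSpectralProjection, RCLike.ofReal_real_eq_id]; rfl
      _ = (A.trace - energy hA) / 2 := by
        rw [sum_min_zero_eq, hA.trace_eq_sum_eigenvalues, energy, RCLike.ofReal_real_eq_id]; rfl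
  have := le_surpStar A hP hA.negSpectralProjection_apply_self_le_one
  rw [hinner] at this
  linarith

/-- If `A ∈ ℝ^{n×n}` is symmetric with `tr(A) = 0`, then `surp*(A) ≥ (1/4)·ℰ(A)`. -/
theorem stmt9 {n : ℕ} (A : Matrix (Fin n) (Fin n) ℝ) (hA : A.IsHermitian)
    (htr : A.trace = 0) :
    surpStar A ≥ (1 / 4) * energy hA := by
  have := energy_sub_trace_le_surpStar hA
  rw [htr] at this
  linarith
end
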